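/- Let (A, ω) be a weighted K-algebra possessing an idempotent e (e·e = e, e ≠ 0) with ω(e) = 1, and let f ∈ K(T) be such that ρ̂(f) = 0 for every substitution ρ : T → H_ω. Assume that the cardinality of K∖{0} is strictly greater than the degree of f in each variable (where the degree of f in t_i is the maximal number of occurrences of t_i in a monomial of f). Then for every variable t_i and every y ∈ A with ω(y) = 0, (∂_i f)(L_e)(y) = 0, where L_e ∈ End_K(A) is the left-multiplication operator x ↦ e·x and (∂_i f)(L_e) is the evaluation of the polynomial ∂_i f ∈ K[X] at L_e (the constant term acting as a multiple of the identity). -/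

import Mathlib

namespace Evanescent

universe u v

variable {T : Type u}

/-- The commutativity relation on the free magma on `T`. -/
inductive CommRel (T : Type u) : FreeMagma T → FreeMagma T → Prop
  | comm (a b : FreeMagma T) : CommRel T (a * b) (b * a)
  | mul_left {a b : FreeMagma T} (c : FreeMagma T) :
      CommRel T a b → CommRel T (a * c) (b * c)
  | mul_right (c : FreeMagma T) {a b : FreeMagma T} :
      CommRel T a b → CommRel T (c * a) (c * b)

/-- The free commutative magma on `T`: the set of commutative nonassociative
monomials (words) in the variables `T`. -/
def FreeCommMagma (T : Type u) : Type u := Quot (CommRel T)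

namespace FreeCommMagma

instance : Mul (FreeCommMagma T) :=
  ⟨Quot.map₂ (· * ·) (fun a _ _ h => CommRel.mul_right a h)
    (fun _ _ b h => CommRel.mul_left b h)⟩

/-- The class of a nonassociative word in the free commutative magma. -/
def mk (w : FreeMagma T) : FreeCommMagma T := Quot.mk (CommRel T) w

/-- The generator of the free commutative magma corresponding to a variable. -/
def of (t : T) : FreeCommMagma T := mk (FreeMagma.of t)

@[simp] lemma mk_mul (a b : FreeMagma T) : mk a * mk b = mk (a * b) := rfl

protected lemma mul_comm (a b : FreeCommMagma T) : a * b = b * a := by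
  induction a using Quot.ind
  induction b using Quot.ind
  exact Quot.sound (CommRel.comm _ _)

instance : CommMagma (FreeCommMagma T) := ⟨FreeCommMagma.mul_comm⟩

end FreeCommMagma

section Peirce

variable (R : Type v) [Semiring R] [DecidableEq T]

/-- The Peirce polynomial of a (noncommutative) nonassociative word, with
coefficients in `R`. -/
noncomputable def peirceAux (i : T) : FreeMagma T → Polynomial R
  | .of j => if j = i then 1 else 0
  | .mul u v => Polynomial.X * (peirceAux i u + peirceAux i v)

@[simp] lemma peirceAux_mul (i : T) (u v : FreeMagma T) :
    peirceAux R i (u * v) = Polynomial.X * (peirceAux R i u + peirceAux R i v) := rfl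

@[simp] lemma peirceAux_of (i j : T) :
    peirceAux R i (FreeMagma.of j) = if j = i then 1 else 0 := rfl

/-- The number of occurrences of the variable `i` in a nonassociative word. -/
def countAux (i : T) : FreeMagma T → ℕ
  | .of j => if j = i then 1 else 0
  | .mul u v => countAux i u + countAux i v

@[simp] lemma countAux_mul (i : T) (u v : FreeMagma T) :
    countAux i (u * v) = countAux i u + countAux i v := rfl

lemma peirceAux_respects (i : T) {a b : FreeMagma T} (h : CommRel T a b) :
    peirceAux R i a = peirceAux R i b := by
  induction h with
  | comm a b => simp [add_comm]
  | mul_left c h ih => simp [ih]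
  | mul_right c h ih => simp [ih]

lemma countAux_respects (i : T) {a b : FreeMagma T} (h : CommRel T a b) :
    countAux i a = countAux i b := by
  induction h with
  | comm a b => simp [Nat.add_comm]
  | mul_left c h ih => simp [ih]
  | mul_right c h ih => simp [ih]

/-- The Peirce polynomial `∂ᵢ(w)` of a commutative nonassociative monomial `w`,
determined by `∂ᵢ(tᵢ) = 1`, `∂ᵢ(tⱼ) = 0` for `j ≠ i`, and
`∂ᵢ(u·v) = X·(∂ᵢ(u) + ∂ᵢ(v))`. -/
noncomputable def FreeCommMagma.peirce (i : T) : FreeCommMagma T → Polynomial R :=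
  Quot.lift (peirceAux R i) fun _ _ h => peirceAux_respects R i h

/-- The number of occurrences (degree) of the variable `i` in a commutative
nonassociative monomial. -/
def FreeCommMagma.count (i : T) : FreeCommMagma T → ℕ :=
  Quot.lift (countAux i) fun _ _ h => countAux_respects i h

end Peirce

/-- Principal powers of an element of a magma: `ppow a n = a^(n+1)`,
i.e. `ppow a 0 = a` and `ppow a (n+1) = a * (ppow a n)`. -/
def ppow {M : Type v} [Mul M] (a : M) : ℕ → M
  | 0 => a
  | n + 1 => a * ppow a n

/-- Iterated left multiplication: `lpow a r g = a^{{r}} g`, i.e. `lpow a 0 g = g` and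
`lpow a (r+1) g = a * (lpow a r g)`. -/
def lpow {M : Type v} [Mul M] (a : M) : ℕ → M → M
  | 0, g => g
  | r + 1, g => a * lpow a r g

section Algebra

variable (K : Type v) [Field K]

/-- A commutative nonassociative monomial, viewed as an element of the free
commutative nonassociative algebra `K(T)` (realized as the magma algebra of the
free commutative magma). -/
noncomputable def mono (w : FreeCommMagma T) : MonoidAlgebra K (FreeCommMagma T) :=
  MonoidAlgebra.single w 1

/-- The augmentation (sum of the coefficients) of an element of the free
commutative nonassociative algebra. -/
noncomputable def aug : MonoidAlgebra K (FreeCommMagma T) →ₗ[K] K :=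
  Finsupp.lsum K (fun _ => LinearMap.id) ∘ₗ (MonoidAlgebra.coeffLinearEquiv K).toLinearMap

/-- The Peirce polynomial `∂ᵢ : K(T) → K[X]`, the `K`-linear map determined on
monomials by `∂ᵢ(tᵢ) = 1`, `∂ᵢ(tⱼ) = 0` for `j ≠ i`, and `∂ᵢ(u·v) = X·(∂ᵢ(u) + ∂ᵢ(v))`. -/
noncomputable def Dp [DecidableEq T] (i : T) :
    MonoidAlgebra K (FreeCommMagma T) →ₗ[K] Polynomial K :=
  (Finsupp.lsum K fun w => LinearMap.toSpanSingleton K (Polynomial K)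
    (FreeCommMagma.peirce K i w)) ∘ₗ (MonoidAlgebra.coeffLinearEquiv K).toLinearMap

/-- The free commutative nonassociative algebra is commutative. -/
lemma fca_mul_comm (f g : MonoidAlgebra K (FreeCommMagma T)) : f * g = g * f := by
  rw [MonoidAlgebra.mul_def, MonoidAlgebra.mul_def, Finsupp.sum_comm]
  refine Finsupp.sum_congr fun a _ => Finsupp.sum_congr fun c _ => ?_
  rw [FreeCommMagma.mul_comm, mul_comm (f.coeff c) (g.coeff a)]

end Algebra

section Subst

variable (K : Type v) [Field K] {A : Type*} [Mul A]

/-- Evaluation of a nonassociative word under a substitution of the variables. -/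
def evalAux (ρ : T → A) : FreeMagma T → A
  | .of t => ρ t
  | .mul u v => evalAux ρ u * evalAux ρ v

@[simp] lemma evalAux_mul (ρ : T → A) (u v : FreeMagma T) :
    evalAux ρ (u * v) = evalAux ρ u * evalAux ρ v := rfl

/-- Evaluation of a commutative nonassociative monomial in a commutative magma
under a substitution of the variables. -/
def FreeCommMagma.eval (hA : ∀ a b : A, a * b = b * a) (ρ : T → A) :
    FreeCommMagma T → A :=
  Quot.lift (evalAux ρ) (by
    intro a b h
    induction h with
    | comm a b => exact hA _ _
    | mul_left c h ih => simp [ih]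
    | mul_right c h ih => simp [ih])

/-- The substitution homomorphism `ρ̂ : K(T) → A` extending a substitution
`ρ : T → A` of the variables, for `A` a commutative nonassociative `K`-algebra. -/
noncomputable def subst [AddCommMonoid A] [Module K A]
    (hA : ∀ a b : A, a * b = b * a) (ρ : T → A)
    (f : MonoidAlgebra K (FreeCommMagma T)) : A :=
  f.coeff.sum fun w c => c • FreeCommMagma.eval hA ρ w

end Subst

/-- The list of the leaves of a nonassociative word (a rooted binary tree with
leaves labeled by the variables), together with their heights. -/
def leaves : FreeMagma T → List (T × ℕ)
  | .of t => [(t, 0)]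
  | .mul u v => (leaves u ++ leaves v).map fun p => (p.1, p.2 + 1)

end Evanescent

/-!
Substitute `tⱼ ↦ e + λ δᵢⱼ y`, which has weight `1` for every `λ ∈ K`. Then `ρ̂_λ(f)` is a
polynomial in `λ` with coefficients in `A`, of degree at most the degree `d` of `f` in `tᵢ`, which
vanishes at every `λ`; as `K∖{0}` has more than `d` elements, all its coefficients vanish. Since
`e` is idempotent, the coefficient of `λ` is `(∂ᵢ f)(L_e) y`.
-/

open Cardinal in
theorem Polynomial.eq_zero_of_natDegree_lt_mk_of_eval_eq_zero {R : Type*} [CommRing R]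
    [IsDomain R] (p : Polynomial R) {S : Set R} (heval : ∀ x ∈ S, p.eval x = 0)
    (hcard : p.natDegree < #S) : p = 0 := by
  obtain ⟨s, hs⟩ := exists_finset_le_card S (p.natDegree + 1)
    (by exact_mod_cast natCast_add_one_le_iff.mpr hcard)
  exact eq_zero_of_natDegree_lt_card_of_eval_eq_zero p
    (Subtype.val_injective.comp Subtype.val_injective : Function.Injective fun x : s => (x : R))
    (fun x => heval _ x.1.2) (by simpa using hs)

namespace PolynomialModule

open Finset

variable {K : Type*} [Field K] {A : Type*}

section Ring

variable [NonUnitalNonAssocRing A] [Module K A]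

/-- The convolution product, making `PolynomialModule K A` a model of `A[λ]` for nonassociative
`A` (where `Polynomial A` is not available). -/
noncomputable instance : Mul (PolynomialModule K A) :=
  ⟨fun g h => g.coeff.sum fun a x => h.coeff.sum fun b y => single K (a + b) (x * y)⟩

lemma mul_def (g h : PolynomialModule K A) :
    g * h = g.coeff.sum fun a x => h.coeff.sum fun b y => single K (a + b) (x * y) := rfl

lemma coeff_mul (g h : PolynomialModule K A) (n : ℕ) :
    (g * h).coeff n = ∑ p ∈ antidiagonal n, g.coeff p.1 * h.coeff p.2 := by
  classical
  calc (g * h).coeff n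
      = ∑ p ∈ g.coeff.support ×ˢ h.coeff.support with p.1 + p.2 = n,
          g.coeff p.1 * h.coeff p.2 := by
        rw [sum_filter, sum_product]
        simp only [mul_def, Finsupp.sum, coeff_sum, coeff_single, Finsupp.coe_finsetSum,
          Finset.sum_apply, Finsupp.single_apply]
    _ = ∑ p ∈ antidiagonal n with p.1 ∈ g.coeff.support ∧ p.2 ∈ h.coeff.support,
          g.coeff p.1 * h.coeff p.2 := by
        congr 1; ext; simp only [mem_filter, mem_product, HasAntidiagonal.mem_antidiagonal]; tauto
    _ = ∑ p ∈ antidiagonal n, g.coeff p.1 * h.coeff p.2 :=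
        sum_subset (filter_subset _ _) fun p _ hp => by
          simp only [mem_filter, Finsupp.mem_support_iff, not_and, not_not] at hp
          by_cases h1 : g.coeff p.1 = 0
          · rw [h1, zero_mul]
          · rw [hp ‹_› h1, mul_zero]

lemma coeff_mul_zero (g h : PolynomialModule K A) :
    (g * h).coeff 0 = g.coeff 0 * h.coeff 0 := by
  simp [coeff_mul]

lemma coeff_mul_one (g h : PolynomialModule K A) :
    (g * h).coeff 1 = g.coeff 0 * h.coeff 1 + g.coeff 1 * h.coeff 0 := by
  simp [coeff_mul, Nat.antidiagonal_succ]

lemma coeff_mul_eq_zero_of_lt {g h : PolynomialModule K A} {m n : ℕ}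
    (hg : ∀ k, m < k → g.coeff k = 0) (hh : ∀ k, n < k → h.coeff k = 0) {k : ℕ} (hk : m + n < k) :
    (g * h).coeff k = 0 := by
  rw [coeff_mul]
  refine sum_eq_zero fun p hp => ?_
  rw [HasAntidiagonal.mem_antidiagonal] at hp
  rcases lt_or_ge m p.1 with h1 | h1
  · rw [hg _ h1, zero_mul]
  · rw [hh _ (by omega), mul_zero]

end Ring

protected lemma mul_comm [NonUnitalNonAssocCommRing A] [Module K A] (g h : PolynomialModule K A) :
    g * h = h * g := by
  refine coeff_injective (Finsupp.ext fun n => ?_)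
  rw [coeff_mul, coeff_mul, ← Nat.sum_antidiagonal_swap]
  simp [mul_comm]

lemma eval_mul [NonUnitalNonAssocRing A] [Module K A] [SMulCommClass K A A] [IsScalarTower K A A]
    (l : K) (g h : PolynomialModule K A) : eval l (g * h) = eval l g * eval l h := by
  rw [mul_def, map_finsuppSum, eval_apply, eval_apply, Finsupp.sum_mul]
  refine Finsupp.sum_congr fun a _ => ?_
  rw [map_finsuppSum, Finsupp.mul_sum]
  refine Finsupp.sum_congr fun b _ => ?_
  rw [eval_single, pow_add, mul_smul, smul_mul_assoc, mul_smul_comm]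

variable {M : Type*} [AddCommGroup M] [Module K M]

open Cardinal in
theorem eq_zero_of_eval_eq_zero {g : PolynomialModule K M} {d : ℕ} {S : Set K}
    (hdeg : ∀ k, d < k → g.coeff k = 0) (heval : ∀ l ∈ S, eval l g = 0) (hcard : d < #S) :
    g = 0 := by
  refine coeff_injective (Finsupp.ext fun k => ?_)
  refine (Module.forall_dual_apply_eq_zero_iff K _).mp fun φ => ?_
  set p : Polynomial K := equivPolynomial (map K φ g)
  have hcoeff : ∀ k, p.coeff k = φ (g.coeff k) := fun k => rfl
  have hpdeg : p.natDegree ≤ d := Polynomial.natDegree_le_iff_coeff_eq_zero.mpr fun m hm => by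
    rw [hcoeff, hdeg m (by exact_mod_cast hm), map_zero]
  have hp : p = 0 := by
    refine p.eq_zero_of_natDegree_lt_mk_of_eval_eq_zero (S := S) (fun l hl => ?_)
      (lt_of_le_of_lt (by exact_mod_cast hpdeg) hcard)
    rw [← Polynomial.coe_aeval_eq_eval, aeval_equivPolynomial]
    simpa [heval l hl] using eval_map K φ g l
  simpa [hp] using (hcoeff k).symm

end PolynomialModule

namespace Evanescent

open PolynomialModule

section Substitution

variable {T : Type*} {M N : Type*} [Mul M] [Mul N]

lemma map_evalAux (φ : M →ₙ* N) (ρ : T → M) (w : FreeMagma T) :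
    φ (evalAux ρ w) = evalAux (φ ∘ ρ) w := by
  induction w with
  | ih1 t => rfl
  | ih2 u v ihu ihv => rw [evalAux_mul, evalAux_mul, map_mul, ihu, ihv]

lemma FreeCommMagma.map_eval (φ : M →ₙ* N) (hM : ∀ a b : M, a * b = b * a)
    (hN : ∀ a b : N, a * b = b * a) (ρ : T → M) (w : FreeCommMagma T) :
    φ (FreeCommMagma.eval hM ρ w) = FreeCommMagma.eval hN (φ ∘ ρ) w := by
  induction w using Quot.ind
  exact map_evalAux φ ρ _

variable (K : Type*) [Field K] [AddCommMonoid M] [Module K M] [AddCommMonoid N] [Module K N]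

lemma map_subst (φ : M →ₗ[K] N) (hφ : ∀ a b, φ (a * b) = φ a * φ b)
    (hM : ∀ a b : M, a * b = b * a) (hN : ∀ a b : N, a * b = b * a) (ρ : T → M)
    (f : MonoidAlgebra K (FreeCommMagma T)) :
    φ (subst K hM ρ f) = subst K hN (φ ∘ ρ) f := by
  rw [subst, subst, map_finsuppSum]
  refine Finsupp.sum_congr fun w _ => ?_
  rw [_root_.map_smul]
  exact congrArg _ (FreeCommMagma.map_eval ⟨φ, hφ⟩ hM hN ρ w)

end Substitution

section PeirceSubst

variable {K : Type*} [Field K] {A : Type*} [NonUnitalNonAssocCommRing A] [Module K A]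
  {T : Type*}

lemma coeff_subst (ρ : T → PolynomialModule K A) (f : MonoidAlgebra K (FreeCommMagma T)) (k : ℕ) :
    (subst K PolynomialModule.mul_comm ρ f).coeff k =
      f.coeff.sum fun w c => c • (FreeCommMagma.eval PolynomialModule.mul_comm ρ w).coeff k := by
  simp only [subst, coeff_finsuppSum, Finsupp.sum_apply]
  rfl

variable [DecidableEq T]

variable (K) in
/-- The substitution `tⱼ ↦ e + λ δᵢⱼ y`, as a polynomial in `λ`. -/
noncomputable def peirceSubst (i : T) (e y : A) (j : T) : PolynomialModule K A :=
  single K 0 e + if j = i then single K 1 y else 0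

lemma eval_peirceSubst (l : K) (i : T) (e y : A) (j : T) :
    eval l (peirceSubst K i e y j) = e + if j = i then l • y else 0 := by
  split_ifs <;> simp [peirceSubst, *]

lemma coeff_zero_evalAux_peirceSubst {e : A} (hee : e * e = e) (i : T) (y : A)
    (w : FreeMagma T) : (evalAux (peirceSubst K i e y) w).coeff 0 = e := by
  induction w with
  | ih1 j => by_cases h : j = i <;> simp [evalAux, peirceSubst, h]
  | ih2 u v ihu ihv => rw [evalAux_mul, coeff_mul_zero, ihu, ihv, hee]

lemma coeff_one_evalAux_peirceSubst [SMulCommClass K A A] {e : A} (hee : e * e = e) (i : T)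
    (y : A) (w : FreeMagma T) :
    (evalAux (peirceSubst K i e y) w).coeff 1 =
      Polynomial.aeval (LinearMap.mulLeft K e) (peirceAux K i w) y := by
  induction w with
  | ih1 j => by_cases h : j = i <;> simp [evalAux, peirceSubst, h]
  | ih2 u v ihu ihv =>
    rw [evalAux_mul, coeff_mul_one, ihu, ihv, coeff_zero_evalAux_peirceSubst hee,
      coeff_zero_evalAux_peirceSubst hee, peirceAux_mul]
    simp [mul_add, mul_comm _ e, add_comm]

lemma coeff_evalAux_peirceSubst_eq_zero (i : T) (e y : A) (w : FreeMagma T) {k : ℕ}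
    (hk : countAux i w < k) : (evalAux (peirceSubst K i e y) w).coeff k = 0 := by
  induction w generalizing k with
  | ih1 j =>
    have hk0 : k ≠ 0 := by omega
    by_cases h : j = i <;> simp [countAux, h] at hk <;>
      simp [evalAux, peirceSubst, h, hk0.symm, hk.ne']
  | ih2 u v ihu ihv => exact coeff_mul_eq_zero_of_lt (fun _ => ihu) (fun _ => ihv) hk

lemma coeff_one_subst_peirceSubst [SMulCommClass K A A] {e : A} (hee : e * e = e) (i : T) (y : A)
    (f : MonoidAlgebra K (FreeCommMagma T)) :
    (subst K PolynomialModule.mul_comm (peirceSubst K i e y) f).coeff 1 =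
      Polynomial.aeval (LinearMap.mulLeft K e) (Dp K i f) y := by
  have hDp : Dp K i f = f.coeff.sum fun w c => c • FreeCommMagma.peirce K i w := rfl
  rw [coeff_subst, hDp, map_finsuppSum, LinearMap.finsupp_sum_apply]
  refine Finsupp.sum_congr fun w _ => ?_
  induction w using Quot.ind
  rw [_root_.map_smul, LinearMap.smul_apply]
  exact congrArg _ (coeff_one_evalAux_peirceSubst hee i y _)

lemma coeff_subst_peirceSubst_eq_zero (i : T) (e y : A) (f : MonoidAlgebra K (FreeCommMagma T))
    {k : ℕ} (hk : (f.coeff.support.sup fun w => FreeCommMagma.count i w) < k) :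
    (subst K PolynomialModule.mul_comm (peirceSubst K i e y) f).coeff k = 0 := by
  rw [coeff_subst]
  refine Finset.sum_eq_zero fun w hw => ?_
  have hcount := lt_of_le_of_lt (Finset.le_sup (f := fun w => FreeCommMagma.count i w) hw) hk
  induction w using Quot.ind
  exact smul_eq_zero_of_right _ (coeff_evalAux_peirceSubst_eq_zero i e y _ hcount)

lemma eval_subst_peirceSubst [SMulCommClass K A A] [IsScalarTower K A A] (l : K) (i : T)
    (e y : A) (f : MonoidAlgebra K (FreeCommMagma T)) :
    eval l (subst K PolynomialModule.mul_comm (peirceSubst K i e y) f) =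
      subst K mul_comm (fun j => e + if j = i then l • y else 0) f := by
  rw [map_subst K (eval l) (eval_mul l) _ mul_comm,
    show ⇑(eval l) ∘ peirceSubst K i e y = _ from funext (eval_peirceSubst l i e y)]

end PeirceSubst

end Evanescent

open Evanescent in
theorem peirce_polynomial_annihilates_general
    {K : Type u} [Field K]
    {T : Type v} [DecidableEq T]
    {A : Type w} [NonUnitalNonAssocCommRing A] [Module K A]
    [SMulCommClass K A A] [IsScalarTower K A A]
    (ω : A →ₙₐ[K] K)
    (e : A) (hee : e * e = e) (hωe : ω e = 1)
    (f : MonoidAlgebra K (FreeCommMagma T))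
    (hcard : ∀ i : T,
      ((f.coeff.support.sup fun w => FreeCommMagma.count i w : ℕ) : Cardinal)
        < Cardinal.mk {x : K // x ≠ 0})
    (hf : ∀ ρ : T → A, (∀ t, ω (ρ t) = 1) →
      subst K (fun a b => mul_comm a b) ρ f = 0)
    (i : T) (y : A) (hy : ω y = 0) :
    Polynomial.aeval (LinearMap.mulLeft K e) (Dp K i f) y = 0 := by
  have hF : subst K PolynomialModule.mul_comm (peirceSubst K i e y) f = 0 := by
    refine PolynomialModule.eq_zero_of_eval_eq_zero (S := {l | l ≠ 0})
      (fun k hk => coeff_subst_peirceSubst_eq_zero i e y f hk) (fun l _ => ?_) (hcard i)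
    rw [eval_subst_peirceSubst]
    refine hf _ fun j => ?_
    split_ifs <;> simp [hωe, hy]
  rw [← coeff_one_subst_peirceSubst hee, hF, PolynomialModule.coeff_zero, Finsupp.zero_apply]

open Evanescent in
/-- If a weighted `K`-algebra with an idempotent `e` of weight `1`
satisfies the identity `f`, and `K∖{0}` has more elements than the degree of `f` in each
variable, then every Peirce polynomial `∂ᵢ f` annihilates `L_e` on `ker ω`. -/
theorem peirce_polynomial_annihilates
    {K : Type u} [Field K] (hchar : (2 : K) ≠ 0)
    {T : Type v} [DecidableEq T]
    {A : Type w} [NonUnitalNonAssocCommRing A] [Module K A]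
    [SMulCommClass K A A] [IsScalarTower K A A]
    (ω : A →ₙₐ[K] K) (hω : ω ≠ 0)
    (e : A) (hee : e * e = e) (hene : e ≠ 0) (hωe : ω e = 1)
    (f : MonoidAlgebra K (FreeCommMagma T))
    (hcard : ∀ i : T,
      ((f.coeff.support.sup fun w => FreeCommMagma.count i w : ℕ) : Cardinal)
        < Cardinal.mk {x : K // x ≠ 0})
    (hf : ∀ ρ : T → A, (∀ t, ω (ρ t) = 1) →
      subst K (fun a b => mul_comm a b) ρ f = 0)
    (i : T) (y : A) (hy : ω y = 0) :
    Polynomial.aeval (LinearMap.mulLeft K e) (Dp K i f) y = 0 :=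
  peirce_polynomial_annihilates_general ω e hee hωe f hcard hf i y hy
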